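/- arXiv:2510.20510 — 2 statements merged into one kernel-verified Lean document; each statement's English description precedes it below -/
import Mathlib

section
/- For every closed subset W ⊆ O, the set DS_W is exactly the ℚ-linear span of {v_o : o ∈ W}. (This is the abstract linear-algebra content of Corollary 3 of the paper: the space DI_W^{>r} equals the collection of vectors in DM̲_W^{>r} satisfying all the relations of Proposition 2.) -/
private lemma sum_split {I : Type*} (f : I →₀ ℚ) (g h : I → ℚ) :
    (f.sum fun j a => a * (g j + h j))
      = (f.sum fun j a => a * g j) + (f.sum fun j a => a * h j) := by
  simp [Finsupp.sum, mul_add, Finset.sum_add_distrib]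

private lemma sum_sub' {I : Type*} (f : I →₀ ℚ) (r : ℚ) (g h : I → ℚ) :
    (f.sum fun j a => a * (g j - r * h j))
      = (f.sum fun j a => a * g j) - r * (f.sum fun j a => a * h j) := by
  rw [Finsupp.sum, Finsupp.sum, Finsupp.sum, Finset.mul_sum, ← Finset.sum_sub_distrib]
  exact Finset.sum_congr rfl fun j _ => by ring

private lemma sum_smul' {I : Type*} (f : I →₀ ℚ) (r : ℚ) (g : I → ℚ) :
    (f.sum fun j a => a * (r * g j)) = r * (f.sum fun j a => a * g j) := by
  rw [Finsupp.sum, Finsupp.sum, Finset.mul_sum]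
  exact Finset.sum_congr rfl fun j _ => by ring

private lemma aux1 {O I : Type*} [Fintype O] [PartialOrder O]
    (τ : I → O) (hτ : Function.Surjective τ)
    (v : O → I → ℚ)
    (h1 : ∀ o i, τ i ≤ o → v o i ≠ 0)
    (h2 : ∀ o i, ¬ τ i ≤ o → v o i = 0)
    (c : I → I → ℚ) (c' : I → I → (I →₀ ℚ))
    (hc' : ∀ i₀ i₁, τ i₀ = τ i₁ → ∀ j ∈ (c' i₀ i₁).support, τ i₀ < τ j)
    (hrel : ∀ i₀ i₁, τ i₀ = τ i₁ → ∀ o,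
      v o i₁ = c i₀ i₁ * v o i₀ + (c' i₀ i₁).sum fun j a => a * v o j) :
    ∀ (S : Finset O), (∀ o₁ ∈ S, ∀ o₂, o₂ ≤ o₁ → o₂ ∈ S) →
      ∀ u : I → ℚ, (∀ i, τ i ∉ S → u i = 0) →
      (∀ i₀ i₁, τ i₀ = τ i₁ →
        u i₁ = c i₀ i₁ * u i₀ + (c' i₀ i₁).sum fun j a => a * u j) →
      u ∈ Submodule.span ℚ (v '' (S : Set O)) := by
  classical
  intro S
  induction S using Finset.strongInduction with
  | _ S ih =>
    intro hS u hu0 hurel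
    rcases S.eq_empty_or_nonempty with rfl | hne
    · have hu : u = 0 := funext fun i => hu0 i (by simp)
      simp [hu]
    · obtain ⟨o, hoS, homax⟩ := S.exists_maximal hne
      obtain ⟨i₀, hi₀⟩ := hτ o
      set α := u i₀ / v o i₀ with hα
      have hvo : v o i₀ ≠ 0 := h1 o i₀ (le_of_eq hi₀)
      set u' : I → ℚ := fun i => u i - α * v o i with hu'
      have hout : ∀ i, τ i ∉ S → u' i = 0 := by
        intro i hi
        have hv0 : v o i = 0 := h2 o i (fun hle => hi (hS o hoS _ hle))
        simp [hu', hu0 i hi, hv0]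
      have hi₀0 : u' i₀ = 0 := by
        simp only [hu', hα]
        rw [div_mul_cancel₀ _ hvo, sub_self]
      have hurel' : ∀ a b, τ a = τ b →
          u' b = c a b * u' a + (c' a b).sum fun j x => x * u' j := by
        intro a b hab
        simp only [hu']
        rw [sum_sub' (c' a b) α u (v o), hurel a b hab, hrel a b hab o]
        ring
      have hfib : ∀ i₁, τ i₁ = o → u' i₁ = 0 := by
        intro i₁ h₁
        rw [hurel' i₀ i₁ (hi₀.trans h₁.symm), hi₀0, Finsupp.sum]
        have hz : ∀ j ∈ (c' i₀ i₁).support, (c' i₀ i₁) j * u' j = 0 := by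
          intro j hj
          have hlt := hc' i₀ i₁ (hi₀.trans h₁.symm) j hj
          rw [hi₀] at hlt
          have hjS : τ j ∉ S := fun hmem => (lt_irrefl _) (hlt.trans_le (homax hmem hlt.le))
          simp [hout j hjS]
        rw [Finset.sum_eq_zero hz]
        ring
      have hS' : ∀ o₁ ∈ S.erase o, ∀ o₂, o₂ ≤ o₁ → o₂ ∈ S.erase o := by
        intro o₁ h₁ o₂ h₂
        rw [Finset.mem_erase] at h₁ ⊢
        refine ⟨?_, hS o₁ h₁.2 o₂ h₂⟩
        rintro rfl
        rcases lt_or_eq_of_le h₂ with hlt | heq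
        · exact (lt_irrefl _) (hlt.trans_le (homax h₁.2 hlt.le))
        · exact h₁.1 heq.symm
      have hmem := ih (S.erase o) (Finset.erase_ssubset hoS) hS' u'
        (fun i hi => by
          by_cases h : τ i = o
          · exact hfib i h
          · exact hout i (fun hmem' => hi (Finset.mem_erase.mpr ⟨h, hmem'⟩)))
        hurel'
      have hspan : u' ∈ Submodule.span ℚ (v '' (S : Set O)) :=
        Submodule.span_mono (Set.image_mono
          (Finset.coe_subset.mpr (Finset.erase_subset _ _))) hmem
      have hvmem : v o ∈ Submodule.span ℚ (v '' (S : Set O)) :=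
        Submodule.subset_span ⟨o, by simpa using hoS, rfl⟩
      have hdecomp : u = u' + α • v o := by
        funext i
        simp only [hu', Pi.add_apply, Pi.smul_apply, smul_eq_mul]
        ring
      rw [hdecomp]
      exact Submodule.add_mem _ hspan (Submodule.smul_mem _ _ hvmem)

/-- For every closed subset `W ⊆ O`, the set `DS_W` of vectors supported
over `W` and satisfying all the relations of Proposition 2 is exactly the ℚ-span of
`{v o : o ∈ W}`. -/
theorem stmt1 {O I : Type*} [Fintype O] [PartialOrder O]
    (τ : I → O) (hτ : Function.Surjective τ)
    (v : O → I → ℚ)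
    (h1 : ∀ o i, τ i ≤ o → v o i ≠ 0)
    (h2 : ∀ o i, ¬ τ i ≤ o → v o i = 0)
    (c : I → I → ℚ) (c' : I → I → (I →₀ ℚ))
    (hc : ∀ i₀ i₁, τ i₀ = τ i₁ → c i₀ i₁ ≠ 0)
    (hc' : ∀ i₀ i₁, τ i₀ = τ i₁ → ∀ j ∈ (c' i₀ i₁).support, τ i₀ < τ j)
    (hrel : ∀ i₀ i₁, τ i₀ = τ i₁ → ∀ o,
      v o i₁ = c i₀ i₁ * v o i₀ + (c' i₀ i₁).sum fun j a => a * v o j)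
    (W : Set O) (hW : ∀ o₁ ∈ W, ∀ o₂, o₂ ≤ o₁ → o₂ ∈ W) :
    {u : I → ℚ | (∀ i, τ i ∉ W → u i = 0) ∧
      ∀ i₀ i₁, τ i₀ = τ i₁ →
        u i₁ = c i₀ i₁ * u i₀ + (c' i₀ i₁).sum fun j a => a * u j}
      = ↑(Submodule.span ℚ (v '' W)) := by
  classical
  ext u
  simp only [Set.mem_setOf_eq, SetLike.mem_coe]
  constructor
  · rintro ⟨hu0, hurel⟩
    have hfin := Set.toFinite W
    have hcoe : (hfin.toFinset : Set O) = W := hfin.coe_toFinset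
    have hm := aux1 τ hτ v h1 h2 c c' hc' hrel hfin.toFinset
      (fun o₁ h₁ o₂ h₂ => hfin.mem_toFinset.mpr (hW o₁ (hfin.mem_toFinset.mp h₁) o₂ h₂))
      u (fun i hi => hu0 i (fun h => hi (hfin.mem_toFinset.mpr h)))
      hurel
    rwa [hcoe] at hm
  · intro hu
    induction hu using Submodule.span_induction with
    | mem x hx =>
      obtain ⟨o, hoW, rfl⟩ := hx
      exact ⟨fun i hi => h2 o i (fun hle => hi (hW o hoW _ hle)),
        fun i₀ i₁ h => hrel i₀ i₁ h o⟩
    | zero => exact ⟨fun _ _ => rfl, fun i₀ i₁ h => by simp⟩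
    | add x y hx hy ihx ihy =>
      refine ⟨fun i hi => by simp [ihx.1 i hi, ihy.1 i hi], fun a b hab => ?_⟩
      simp only [Pi.add_apply]
      rw [sum_split, ihx.2 a b hab, ihy.2 a b hab]
      ring
    | smul r x hx ihx =>
      refine ⟨fun i hi => by simp [ihx.1 i hi], fun a b hab => ?_⟩
      simp only [Pi.smul_apply, smul_eq_mul]
      rw [sum_smul', ihx.2 a b hab]
      ring
end

section
/- Let W ⊆ O be closed, let o be a maximal element of W (i.e. no element of W is strictly greater than o), and let i' ∈ I satisfy τ i' = o. If v ∈ DS_W and v i' = 0, then v i = 0 for every i ∈ I with τ i = o; consequently v ∈ DS_{W'} where W' = W \ {o}. (This is the key inductive step in the proof of Corollary 3 of the paper.) -/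
/-- The correction terms of the relation live strictly above a maximal element of `W`, where `u`
vanishes, so on a maximal fibre the relation degenerates to proportionality. -/
theorem eq_mul_of_forall_not_lt {O I : Type*} [PartialOrder O] (τ : I → O)
    (c : I → I → ℚ) (c' : I → I → (I →₀ ℚ))
    (hc' : ∀ i₀ i₁, τ i₀ = τ i₁ → ∀ j ∈ (c' i₀ i₁).support, τ i₀ < τ j)
    (W : Set O) (u : I → ℚ) (hu1 : ∀ i, τ i ∉ W → u i = 0)
    (hu2 : ∀ i₀ i₁, τ i₀ = τ i₁ →
      u i₁ = c i₀ i₁ * u i₀ + (c' i₀ i₁).sum fun j a => a * u j)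
    {i₀ i₁ : I} (hτi : τ i₀ = τ i₁) (hmax : ∀ o' ∈ W, ¬ τ i₀ < o') :
    u i₁ = c i₀ i₁ * u i₀ := by
  have hsum : ((c' i₀ i₁).sum fun j a => a * u j) = 0 :=
    Finset.sum_eq_zero fun j hj => by
      show c' i₀ i₁ j * u j = 0
      rw [hu1 j fun hjW => hmax (τ j) hjW (hc' i₀ i₁ hτi j hj), mul_zero]
  rw [hu2 i₀ i₁ hτi, hsum, add_zero]

theorem stmt2_general {O I : Type*} [PartialOrder O]
    (τ : I → O)
    (c : I → I → ℚ) (c' : I → I → (I →₀ ℚ))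
    (hc' : ∀ i₀ i₁, τ i₀ = τ i₁ → ∀ j ∈ (c' i₀ i₁).support, τ i₀ < τ j)
    (W : Set O)
    (o : O) (homax : ∀ o' ∈ W, ¬ o < o')
    (i' : I) (hi' : τ i' = o)
    (u : I → ℚ)
    (hu1 : ∀ i, τ i ∉ W → u i = 0)
    (hu2 : ∀ i₀ i₁, τ i₀ = τ i₁ →
      u i₁ = c i₀ i₁ * u i₀ + (c' i₀ i₁).sum fun j a => a * u j)
    (hu0 : u i' = 0) :
    (∀ i, τ i = o → u i = 0) ∧
      ((∀ i, τ i ∉ W \ {o} → u i = 0) ∧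
        ∀ i₀ i₁, τ i₀ = τ i₁ →
          u i₁ = c i₀ i₁ * u i₀ + (c' i₀ i₁).sum fun j a => a * u j) := by
  subst hi'
  have hfibre : ∀ i, τ i = τ i' → u i = 0 := fun i hi => by
    rw [eq_mul_of_forall_not_lt τ c c' hc' W u hu1 hu2 hi.symm homax, hu0, mul_zero]
  refine ⟨hfibre, fun i hi => ?_, hu2⟩
  by_cases hiW : τ i ∈ W
  · exact hfibre i (not_not.mp fun hne => hi ⟨hiW, hne⟩)
  · exact hu1 i hiW

/-- key inductive step in Corollary 3: if `o` is maximal in the closed set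
`W`, `τ i' = o`, and `u ∈ DS_W` vanishes at `i'`, then `u` vanishes at every index with
DeBacker lift `o`, hence `u ∈ DS_{W \ {o}}`. -/
theorem stmt2 {O I : Type*} [Fintype O] [PartialOrder O]
    (τ : I → O) (hτ : Function.Surjective τ)
    (v : O → I → ℚ)
    (h1 : ∀ o i, τ i ≤ o → v o i ≠ 0)
    (h2 : ∀ o i, ¬ τ i ≤ o → v o i = 0)
    (c : I → I → ℚ) (c' : I → I → (I →₀ ℚ))
    (hc : ∀ i₀ i₁, τ i₀ = τ i₁ → c i₀ i₁ ≠ 0)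
    (hc' : ∀ i₀ i₁, τ i₀ = τ i₁ → ∀ j ∈ (c' i₀ i₁).support, τ i₀ < τ j)
    (hrel : ∀ i₀ i₁, τ i₀ = τ i₁ → ∀ o,
      v o i₁ = c i₀ i₁ * v o i₀ + (c' i₀ i₁).sum fun j a => a * v o j)
    (W : Set O) (hW : ∀ o₁ ∈ W, ∀ o₂, o₂ ≤ o₁ → o₂ ∈ W)
    (o : O) (hoW : o ∈ W) (homax : ∀ o' ∈ W, ¬ o < o')
    (i' : I) (hi' : τ i' = o)
    (u : I → ℚ)
    (hu1 : ∀ i, τ i ∉ W → u i = 0)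
    (hu2 : ∀ i₀ i₁, τ i₀ = τ i₁ →
      u i₁ = c i₀ i₁ * u i₀ + (c' i₀ i₁).sum fun j a => a * u j)
    (hu0 : u i' = 0) :
    (∀ i, τ i = o → u i = 0) ∧
      ((∀ i, τ i ∉ W \ {o} → u i = 0) ∧
        ∀ i₀ i₁, τ i₀ = τ i₁ →
          u i₁ = c i₀ i₁ * u i₀ + (c' i₀ i₁).sum fun j a => a * u j) :=
  stmt2_general τ c c' hc' W o homax i' hi' u hu1 hu2 hu0
end
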